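/- Let A be the normal closure of {x_s : s ∈ S} in the free group F(n). Then every non-constant term of the Magnus expansion of any element of A contains at least one occurrence of some variable X_s with s ∈ S. -/

import Mathlib

/-!
Substituting `X_s ↦ 0` for `s ∈ S` is a ring endomorphism of `ℤ⟨⟨X_1,…,X_n⟩⟩` that sends each
`1 + X_s` with `s ∈ S` to `1`. Composed with the Magnus expansion it is therefore a homomorphism
from `F(n)` that kills every `x_s`, hence the whole normal closure `A`: the Magnus expansion of
an element of `A` has the same coefficients as `1` on all words avoiding `S`.
-/

/-- The ring `ℤ⟨⟨X_1,…,X_n⟩⟩` of formal power series in `n` non-commuting variables with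
integer coefficients, realized as coefficient functions on words in the variables. -/
def NC (n : ℕ) : Type := List (Fin n) → ℤ

namespace NC

variable {n : ℕ}

instance : AddCommGroup (NC n) := Pi.addCommGroup

instance : One (NC n) := ⟨fun w => if w = [] then 1 else 0⟩

/-- Convolution (Cauchy) product of non-commutative power series. -/
instance : Mul (NC n) :=
  ⟨fun f g w => ∑ k ∈ Finset.range (w.length + 1), f (w.take k) * g (w.drop k)⟩

theorem mul_apply (f g : NC n) (w : List (Fin n)) :
    (f * g) w = ∑ k ∈ Finset.range (w.length + 1), f (w.take k) * g (w.drop k) := rfl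

theorem one_apply (w : List (Fin n)) : (1 : NC n) w = if w = [] then 1 else 0 := rfl

theorem zero_apply (w : List (Fin n)) : (0 : NC n) w = 0 := rfl

theorem add_apply (f g : NC n) (w : List (Fin n)) : (f + g) w = f w + g w := rfl

protected theorem mul_assoc (f g h : NC n) : f * g * h = f * (g * h) := by
  funext w
  rw [mul_apply, mul_apply]
  calc
    ∑ j ∈ Finset.range (w.length + 1), (f * g) (w.take j) * h (w.drop j)
        = ∑ j ∈ Finset.range (w.length + 1), ∑ i ∈ Finset.range (j + 1),
            f (w.take i) * g ((w.drop i).take (j - i)) * h (w.drop j) := by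
          refine Finset.sum_congr rfl ?_
          intro j hj
          simp only [Finset.mem_range] at hj
          rw [mul_apply, Finset.sum_mul]
          have hlen : (w.take j).length = j := by rw [List.length_take]; omega
          rw [hlen]
          refine Finset.sum_congr rfl ?_
          intro i hi
          simp only [Finset.mem_range] at hi
          have h1 : (w.take j).take i = w.take i := by
            rw [List.take_take]; congr 1; omega
          have h2 : (w.take j).drop i = (w.drop i).take (j - i) := List.drop_take
          rw [h1, h2]
    _ = ∑ i ∈ Finset.range (w.length + 1), ∑ k ∈ Finset.range ((w.length - i) + 1),
            f (w.take i) * g ((w.drop i).take k) * h (w.drop (i + k)) := by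
          rw [Finset.sum_sigma', Finset.sum_sigma']
          refine Finset.sum_nbij' (fun p => ⟨p.2, p.1 - p.2⟩) (fun q => ⟨q.1 + q.2, q.1⟩)
            ?_ ?_ ?_ ?_ ?_
          · rintro ⟨j, i⟩ hp
            simp only [Finset.mem_sigma, Finset.mem_range] at hp ⊢
            omega
          · rintro ⟨i, k⟩ hq
            simp only [Finset.mem_sigma, Finset.mem_range] at hq ⊢
            omega
          · rintro ⟨j, i⟩ hp
            simp only [Finset.mem_sigma, Finset.mem_range] at hp
            have hji : i + (j - i) = j := by omega
            simp [hji]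
          · rintro ⟨i, k⟩ hq
            simp only [Finset.mem_sigma, Finset.mem_range] at hq
            have hik : i + k - i = k := by omega
            simp [hik]
          · rintro ⟨j, i⟩ hp
            simp only [Finset.mem_sigma, Finset.mem_range] at hp
            have : i + (j - i) = j := by omega
            rw [this]
    _ = ∑ i ∈ Finset.range (w.length + 1), f (w.take i) * (g * h) (w.drop i) := by
          refine Finset.sum_congr rfl ?_
          intro i hi
          simp only [Finset.mem_range] at hi
          rw [mul_apply, Finset.mul_sum]
          have hlen : (w.drop i).length = w.length - i := by rw [List.length_drop]
          rw [hlen]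
          refine Finset.sum_congr rfl ?_
          intro k hk
          rw [List.drop_drop]
          ring_nf

protected theorem one_mul (f : NC n) : 1 * f = f := by
  funext w
  rw [mul_apply]
  rw [Finset.sum_eq_single 0]
  · simp [one_apply]
  · intro b hb hb0
    rw [one_apply]
    rw [if_neg, zero_mul]
    intro hnil
    rcases List.take_eq_nil_iff.mp hnil with h | h
    · exact hb0 h
    · subst h; simp at hb; exact hb0 hb
  · intro h; simp at h

protected theorem mul_one (f : NC n) : f * 1 = f := by
  funext w
  rw [mul_apply]
  rw [Finset.sum_eq_single w.length]
  · simp [one_apply]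
  · intro b hb hbne
    rw [one_apply, if_neg, mul_zero]
    intro hnil
    have := List.drop_eq_nil_iff.mp hnil
    simp at hb
    omega
  · intro h; simp at h

instance instRing : Ring (NC n) where
  __ := (inferInstance : AddCommGroup (NC n))
  mul := (· * ·)
  one := 1
  mul_assoc := NC.mul_assoc
  one_mul := NC.one_mul
  mul_one := NC.mul_one
  left_distrib f g h := by
    funext w
    simp [mul_apply, add_apply, mul_add, Finset.sum_add_distrib]
  right_distrib f g h := by
    funext w
    simp [mul_apply, add_apply, add_mul, Finset.sum_add_distrib]
  zero_mul f := by
    funext w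
    simp [mul_apply, zero_apply]
  mul_zero f := by
    funext w
    simp [mul_apply, zero_apply]

/-- The variable `X_i` as a power series. -/
def X (i : Fin n) : NC n := fun w => if w = [i] then 1 else 0

/-- The geometric series `1 - X_i + X_i² - X_i³ + ⋯`. -/
def geom (i : Fin n) : NC n :=
  fun w => if ∀ j ∈ w, j = i then (-1) ^ w.length else 0

theorem val_inv (i : Fin n) : (1 + X i) * geom i = 1 := by
  funext w
  rw [mul_apply]
  cases w with
  | nil => simp [one_apply, add_apply, X, geom]
  | cons a t =>
    rw [one_apply, if_neg (by simp)]
    rw [Finset.sum_eq_add 0 1 (by omega)]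
    · have h0 : ((a :: t).take 0) = ([] : List (Fin n)) := rfl
      have h1 : ((a :: t).take 1) = [a] := rfl
      rw [h0, h1]
      simp only [List.drop_zero, List.drop_one]
      by_cases hai : a = i
      · subst hai
        simp only [add_apply, one_apply, X, geom]
        by_cases ht : ∀ j ∈ t, j = a
        · have hat : ∀ j ∈ (a :: t), j = a := fun j hj => by
            rcases List.mem_cons.mp hj with h | h
            · exact h
            · exact ht j h
          simp only [if_pos hat]
          simp [pow_succ]
          convert neg_add_cancel ((-1 : ℤ) ^ t.length) using 2
          exact if_pos ht
        · have hat : ¬ ∀ j ∈ (a :: t), j = a := by simp [ht]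
          simp [ht, hat]
      · simp only [add_apply, one_apply, X, geom]
        have h2 : ¬ ∀ j ∈ (a :: t), j = i := by
          intro hc; exact hai (hc a (by simp))
        have h3 : ¬ ([a] = [i]) := by simp [hai]
        simp [h2, h3]
        exact fun hc => absurd hc hai
    · intro c hc ⟨hc0, hc1⟩
      simp only [Finset.mem_range, List.length_cons] at hc
      have : ((a :: t).take c) ≠ [] ∧ ((a :: t).take c) ≠ [i] := by
        constructor
        · simp [List.take_eq_nil_iff, hc0]
        · intro hcon
          have := congrArg List.length hcon
          simp [List.length_take] at this
          omega
      simp [add_apply, one_apply, X, this.1, this.2]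
    · intro h; simp at h
    · intro h; simp at h

theorem inv_val (i : Fin n) : geom i * (1 + X i) = 1 := by
  funext w
  rw [mul_apply]
  rcases List.eq_nil_or_concat w with hw | ⟨t, a, hw⟩
  · subst hw; simp [one_apply, add_apply, X, geom]
  · rw [List.concat_eq_append] at hw
    subst hw
    rw [one_apply, if_neg (by simp)]
    have hlen : (t ++ [a]).length = t.length + 1 := by simp
    rw [Finset.sum_eq_add t.length (t.length + 1) (by omega)]
    · have h1 : (t ++ [a]).take t.length = t := List.take_left
      have h2 : (t ++ [a]).drop t.length = [a] := List.drop_left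
      have h3 : (t ++ [a]).take (t.length + 1) = t ++ [a] := by
        rw [List.take_of_length_le (by simp)]
      have h4 : (t ++ [a]).drop (t.length + 1) = [] := by
        rw [List.drop_of_length_le (by simp)]
      rw [h1, h2, h3, h4]
      have e1 : ((1 : NC n) + X i) [a] = if a = i then 1 else 0 := by
        by_cases h : a = i <;> simp [add_apply, one_apply, X, h]
      have e2 : ((1 : NC n) + X i) [] = 1 := by
        simp [add_apply, one_apply, X]
      rw [e1, e2, mul_one]
      by_cases ha : a = i
      · rw [if_pos ha, mul_one]
        by_cases ht : ∀ j ∈ t, j = i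
        · have hw' : ∀ j ∈ t ++ [a], j = i := by
            intro j hj
            rcases List.mem_append.mp hj with h | h
            · exact ht j h
            · simp only [List.mem_singleton] at h
              rw [h, ha]
          simp only [geom, if_pos ht, if_pos hw', hlen, pow_succ]
          ring
        · have hw' : ¬ ∀ j ∈ t ++ [a], j = i :=
            fun hc => ht fun j hj => hc j (List.mem_append_left _ hj)
          simp only [geom, if_neg ht, if_neg hw']
          ring
      · rw [if_neg ha, mul_zero, zero_add]
        have hw' : ¬ ∀ j ∈ t ++ [a], j = i :=
          fun hc => ha (hc a (List.mem_append_right t (by simp)))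
        simp only [geom, if_neg hw']
    · intro c hc ⟨hc0, hc1⟩
      simp only [Finset.mem_range, hlen] at hc
      have hne : ((t ++ [a]).drop c) ≠ [] ∧ ((t ++ [a]).drop c) ≠ [i] := by
        constructor
        · intro hcon
          have := congrArg List.length hcon
          simp at this
          omega
        · intro hcon
          have := congrArg List.length hcon
          simp at this
          omega
      simp [add_apply, one_apply, X, hne.1, hne.2]
    · intro h
      exact absurd (by simp only [Finset.mem_range, hlen]; omega) h
    · intro h
      exact absurd (by simp only [Finset.mem_range, hlen]; omega) h

/-- `1 + X_i` as a unit of `ℤ⟨⟨X_1,…,X_n⟩⟩`, with inverse `1 - X_i + X_i² - ⋯`. -/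
def magnusUnit (i : Fin n) : (NC n)ˣ where
  val := 1 + X i
  inv := geom i
  val_inv := val_inv i
  inv_val := inv_val i

end NC

/-- The Magnus expansion `F(n) → ℤ⟨⟨X_1,…,X_n⟩⟩ˣ`, `x_i ↦ 1 + X_i`. -/
def magnus (n : ℕ) : FreeGroup (Fin n) →* (NC n)ˣ := FreeGroup.lift NC.magnusUnit

/-- The coefficient of the monomial `X_{u 0} ⋯ X_{u k}` in the Magnus expansion of `w`. -/
def magnusCoeff {n : ℕ} (w : FreeGroup (Fin n)) (u : List (Fin n)) : ℤ :=
  ((magnus n w : (NC n)ˣ) : NC n) u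

namespace NC

variable {n : ℕ}

/-- The substitution `X_s ↦ 0` for `s ∈ S`. -/
def killVars (S : Finset (Fin n)) : NC n →+* NC n where
  toFun f u := if u.countP (fun j => decide (j ∈ S)) = 0 then f u else 0
  map_one' := by
    funext u
    show (if u.countP (fun j => decide (j ∈ S)) = 0 then _ else 0) = (1 : NC n) u
    split_ifs with h
    · rfl
    · have hu : u ≠ [] := by rintro rfl; exact h rfl
      rw [one_apply, if_neg hu]
  map_mul' f g := by
    funext u
    show (if u.countP (fun j => decide (j ∈ S)) = 0 then _ else 0) =
      ∑ k ∈ Finset.range (u.length + 1), _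
    beta_reduce
    have hsplit : ∀ k, u.countP (fun j => decide (j ∈ S)) =
        (u.take k).countP (fun j => decide (j ∈ S)) +
          (u.drop k).countP (fun j => decide (j ∈ S)) := fun k => by
      rw [← List.countP_append, List.take_append_drop]
    split_ifs with h
    · refine Finset.sum_congr rfl fun k _ => ?_
      have := hsplit k
      rw [if_pos (by omega), if_pos (by omega)]
    · refine (Finset.sum_eq_zero fun k _ => ?_).symm
      have := hsplit k
      split_ifs <;> simp_all
  map_zero' := by funext u; simp [zero_apply]
  map_add' f g := by
    funext u
    show (if u.countP (fun j => decide (j ∈ S)) = 0 then (f + g) u else 0) =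
      (if u.countP (fun j => decide (j ∈ S)) = 0 then f u else 0) +
        (if u.countP (fun j => decide (j ∈ S)) = 0 then g u else 0)
    split_ifs
    · rfl
    · rw [add_zero]

theorem killVars_apply (S : Finset (Fin n)) (f : NC n) (u : List (Fin n)) :
    killVars S f u = if u.countP (fun j => decide (j ∈ S)) = 0 then f u else 0 := rfl

theorem killVars_magnusUnit {S : Finset (Fin n)} {s : Fin n} (hs : s ∈ S) :
    killVars S (magnusUnit s : NC n) = 1 := by
  funext u
  rw [killVars_apply]
  split_ifs with h
  · have hX : X s u = 0 := if_neg fun hu => by simp [hu, hs] at h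
    rw [show (magnusUnit s : NC n) = 1 + X s from rfl, add_apply, hX, add_zero]
  · have hu : u ≠ [] := by rintro rfl; exact h rfl
    rw [one_apply, if_neg hu]

end NC

theorem killVars_magnus_of_mem_normalClosure {n : ℕ} {S : Finset (Fin n)}
    {w : FreeGroup (Fin n)}
    (hw : w ∈ Subgroup.normalClosure (FreeGroup.of '' (S : Set (Fin n)))) :
    NC.killVars S (magnus n w : NC n) = 1 := by
  let φ := (Units.map (NC.killVars S).toMonoidHom).comp (magnus n)
  suffices hker : w ∈ φ.ker from congrArg Units.val hker
  refine Subgroup.normalClosure_le_normal ?_ hw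
  rintro _ ⟨s, hs, rfl⟩
  exact Units.ext (by simpa [φ, magnus] using NC.killVars_magnusUnit hs)

/-- Let `A` be the normal closure of `{x_s : s ∈ S}` in the free group `F(n)`.  Every
non-constant term with nonzero coefficient in the Magnus expansion of an element of `A`
contains at least one occurrence of some variable `X_s` with `s ∈ S`. -/
theorem magnus_normalClosure (n : ℕ) (S : Finset (Fin n))
    (w : FreeGroup (Fin n))
    (hw : w ∈ Subgroup.normalClosure (FreeGroup.of '' (S : Set (Fin n)))) :
    ∀ u : List (Fin n), u ≠ [] → magnusCoeff w u ≠ 0 →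
      1 ≤ u.countP (fun j => decide (j ∈ S)) := by
  intro u hu hcoeff
  by_contra hfree
  have hkill := congrFun (killVars_magnus_of_mem_normalClosure hw) u
  rw [NC.killVars_apply, if_pos (by omega), NC.one_apply, if_neg hu] at hkill
  exact hcoeff hkill
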